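/- arXiv:1003.5174 — 6 statements merged into one kernel-verified Lean document; each statement's English description precedes it below -/
import Mathlib

section
/- Let (x_n) be a decreasing sequence of positive reals and p > 0 an integer. Suppose there exist constants 0 < K₁ < K₂ and an integer n such that for all k ≤ n, K₁ x_k^{p+1} ≤ x_k − x_{k+1} ≤ K₂ x_{k+1}^{p+1}. Then for all 1 ≤ k ≤ n we have (p K₂ + x_0^{-p})^{-1/p} ≤ k^{1/p} x_k ≤ (p K₁)^{-1/p}. -/
lemma pow_sub_pow_bounds {u v : ℝ} (hu : 0 < u) (huv : u ≤ v) (p : ℕ) :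
    (p : ℝ) * u ^ (p - 1) * (v - u) ≤ v ^ p - u ^ p ∧
    v ^ p - u ^ p ≤ (p : ℝ) * v ^ (p - 1) * (v - u) := by
  have hv : 0 < v := lt_of_lt_of_le hu huv
  have hgeom := geom_sum₂_mul v u p
  have hsum_lb : (p : ℝ) * u ^ (p - 1) ≤ ∑ i ∈ Finset.range p, v ^ i * u ^ (p - 1 - i) := by
    calc (p : ℝ) * u ^ (p - 1) = ∑ i ∈ Finset.range p, u ^ (p - 1) := by
          rw [Finset.sum_const, Finset.card_range, nsmul_eq_mul]
      _ ≤ _ := by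
          apply Finset.sum_le_sum
          intro i hi
          have hi' : i ≤ p - 1 := Nat.le_sub_one_of_lt (Finset.mem_range.mp hi)
          calc u ^ (p - 1) = u ^ i * u ^ (p - 1 - i) := by
                rw [← pow_add, Nat.add_sub_cancel' hi']
            _ ≤ v ^ i * u ^ (p - 1 - i) := by
                apply mul_le_mul_of_nonneg_right (pow_le_pow_left₀ hu.le huv i) (by positivity)
  have hsum_ub : ∑ i ∈ Finset.range p, v ^ i * u ^ (p - 1 - i) ≤ (p : ℝ) * v ^ (p - 1) := by
    calc ∑ i ∈ Finset.range p, v ^ i * u ^ (p - 1 - i)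
        ≤ ∑ i ∈ Finset.range p, v ^ (p - 1) := by
          apply Finset.sum_le_sum
          intro i hi
          have hi' : i ≤ p - 1 := Nat.le_sub_one_of_lt (Finset.mem_range.mp hi)
          calc v ^ i * u ^ (p - 1 - i) ≤ v ^ i * v ^ (p - 1 - i) := by
                apply mul_le_mul_of_nonneg_left (pow_le_pow_left₀ hu.le huv _) (by positivity)
            _ = v ^ (p - 1) := by rw [← pow_add, Nat.add_sub_cancel' hi']
      _ = (p : ℝ) * v ^ (p - 1) := by
          rw [Finset.sum_const, Finset.card_range, nsmul_eq_mul]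
  have hd : 0 ≤ v - u := sub_nonneg.mpr huv
  constructor
  · calc (p : ℝ) * u ^ (p - 1) * (v - u)
        ≤ (∑ i ∈ Finset.range p, v ^ i * u ^ (p - 1 - i)) * (v - u) :=
          mul_le_mul_of_nonneg_right hsum_lb hd
      _ = v ^ p - u ^ p := hgeom
  · calc v ^ p - u ^ p = (∑ i ∈ Finset.range p, v ^ i * u ^ (p - 1 - i)) * (v - u) := hgeom.symm
      _ ≤ (p : ℝ) * v ^ (p - 1) * (v - u) := mul_le_mul_of_nonneg_right hsum_ub hd

/-- Corollary `cor1`. For a decreasing positive sequence with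
`K₁ x_k^{p+1} ≤ x_k − x_{k+1} ≤ K₂ x_{k+1}^{p+1}` for `k ≤ n`, one has
`(pK₂ + x_0^{-p})^{-1/p} ≤ k^{1/p} x_k ≤ (pK₁)^{-1/p}` for `1 ≤ k ≤ n`. -/
theorem stmt2 (p : ℕ) (hp : 0 < p) (x : ℕ → ℝ) (hpos : ∀ n, 0 < x n)
    (hanti : StrictAnti x)
    (K₁ K₂ : ℝ) (hK₁ : 0 < K₁) (hK₁₂ : K₁ < K₂) (n : ℕ)
    (h : ∀ k ≤ n, K₁ * x k ^ (p + 1) ≤ x k - x (k + 1) ∧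
      x k - x (k + 1) ≤ K₂ * x (k + 1) ^ (p + 1)) :
    ∀ k : ℕ, 1 ≤ k → k ≤ n →
      ((p : ℝ) * K₂ + x 0 ^ (-(p : ℝ))) ^ (-(1 : ℝ) / p) ≤ (k : ℝ) ^ ((1 : ℝ) / p) * x k ∧
      (k : ℝ) ^ ((1 : ℝ) / p) * x k ≤ ((p : ℝ) * K₁) ^ (-(1 : ℝ) / p) := by
  have hK₂ : 0 < K₂ := hK₁.trans hK₁₂
  -- step inequality
  have step : ∀ k ≤ n, (x k ^ p)⁻¹ + p * K₁ ≤ (x (k+1) ^ p)⁻¹ ∧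
      (x (k+1) ^ p)⁻¹ ≤ (x k ^ p)⁻¹ + p * K₂ := by
    intro k hk
    set u := x (k+1) with hu_def
    set v := x k with hv_def
    have hu : 0 < u := hpos _
    have hv : 0 < v := hpos _
    have huv : u < v := hanti (Nat.lt_succ_self k)
    obtain ⟨h1, h2⟩ := h k hk
    obtain ⟨hlb, hub⟩ := pow_sub_pow_bounds hu huv.le p
    have hup : (0:ℝ) < u ^ p := by positivity
    have hvp : (0:ℝ) < v ^ p := by positivity
    have hpow : u ^ (p - 1) * u = u ^ p := by
      rw [← pow_succ, Nat.sub_add_cancel hp]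
    have hpowv : v ^ (p - 1) * v = v ^ p := by
      rw [← pow_succ, Nat.sub_add_cancel hp]
    have e1 : (u ^ p)⁻¹ - (v ^ p)⁻¹ = (v ^ p - u ^ p) / (u ^ p * v ^ p) := by
      field_simp
    constructor
    · -- v^p - u^p ≥ p K₁ u^p v^p
      have key : (p : ℝ) * K₁ * (u ^ p * v ^ p) ≤ v ^ p - u ^ p := by
        calc (p : ℝ) * K₁ * (u ^ p * v ^ p)
            = (p : ℝ) * u ^ (p - 1) * (K₁ * (v ^ p * u)) := by rw [← hpow]; ring
          _ ≤ (p : ℝ) * u ^ (p - 1) * (K₁ * (v ^ p * v)) := by gcongr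
          _ = (p : ℝ) * u ^ (p - 1) * (K₁ * v ^ (p + 1)) := by rw [pow_succ]
            _ ≤ (p : ℝ) * u ^ (p - 1) * (v - u) := by gcongr
            _ ≤ v ^ p - u ^ p := hlb
      have h' : (p : ℝ) * K₁ ≤ (u ^ p)⁻¹ - (v ^ p)⁻¹ := by
        rw [e1]; exact (le_div_iff₀ (by positivity)).mpr key
      linarith
    · have key : v ^ p - u ^ p ≤ (p : ℝ) * K₂ * (u ^ p * v ^ p) := by
        calc v ^ p - u ^ p ≤ (p : ℝ) * v ^ (p - 1) * (v - u) := hub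
          _ ≤ (p : ℝ) * v ^ (p - 1) * (K₂ * u ^ (p + 1)) := by gcongr
          _ = (p : ℝ) * K₂ * (u ^ p * (v ^ (p - 1) * u)) := by rw [pow_succ]; ring
          _ ≤ (p : ℝ) * K₂ * (u ^ p * (v ^ (p - 1) * v)) := by gcongr
          _ = (p : ℝ) * K₂ * (u ^ p * v ^ p) := by rw [hpowv]
      have h' : (u ^ p)⁻¹ - (v ^ p)⁻¹ ≤ (p : ℝ) * K₂ := by
        rw [e1]; exact (div_le_iff₀ (by positivity)).mpr key
      linarith
  -- accumulate
  have acc : ∀ k, k ≤ n + 1 → (x 0 ^ p)⁻¹ + p * K₁ * k ≤ (x k ^ p)⁻¹ ∧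
      (x k ^ p)⁻¹ ≤ (x 0 ^ p)⁻¹ + p * K₂ * k := by
    intro k
    induction k with
    | zero => intro _; simp
    | succ m ih =>
      intro hm
      have hm' : m ≤ n := Nat.lt_succ_iff.mp hm
      obtain ⟨ih1, ih2⟩ := ih (le_trans (Nat.le_succ m) hm)
      obtain ⟨s1, s2⟩ := step m hm'
      constructor
      · push_cast; nlinarith
      · push_cast; nlinarith
  intro k hk1 hkn
  have hxk : 0 < x k := hpos k
  have hx0 : 0 < x 0 := hpos 0
  obtain ⟨a1, a2⟩ := acc k (le_trans hkn (Nat.le_succ n))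
  have hk0 : (0:ℝ) < (k:ℝ) := by exact_mod_cast hk1
  have hkp : (0:ℝ) < x k ^ p := by positivity
  have hx0p : (0:ℝ) < x 0 ^ p := by positivity
  have hpR : (0:ℝ) < (p:ℝ) := by exact_mod_cast hp
  -- rewrite x 0 ^ (-(p:ℝ)) as (x 0 ^ p)⁻¹
  have hx0rw : x 0 ^ (-(p:ℝ)) = (x 0 ^ p)⁻¹ := by
    rw [Real.rpow_neg hx0.le, Real.rpow_natCast]
  have hC₂ : (0:ℝ) < (p:ℝ) * K₂ + (x 0 ^ p)⁻¹ := by positivity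
  have hC₁ : (0:ℝ) < (p:ℝ) * K₁ := by positivity
  have hppos : p ≠ 0 := hp.ne'
  -- key: a^(-1/p) ≤ b ↔ a⁻¹ ≤ b^p  (for a,b>0)
  have pow_rpow : ∀ c : ℝ, 0 < c → (c ^ (-(1:ℝ)/p)) ^ p = c⁻¹ := by
    intro c hc
    rw [← Real.rpow_natCast (c ^ (-(1:ℝ)/p)) p, ← Real.rpow_mul hc.le]
    have : (-(1:ℝ)/p) * p = -1 := by field_simp
    rw [this, Real.rpow_neg_one]
  have k_rpow : ((k:ℝ) ^ ((1:ℝ)/p)) ^ p = (k:ℝ) := by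
    rw [← Real.rpow_natCast ((k:ℝ) ^ ((1:ℝ)/p)) p, ← Real.rpow_mul hk0.le]
    have : ((1:ℝ)/p) * p = 1 := by field_simp
    rw [this, Real.rpow_one]
  rw [hx0rw]
  constructor
  · -- lower bound
    have hLHS : (0:ℝ) ≤ ((p:ℝ) * K₂ + (x 0 ^ p)⁻¹) ^ (-(1:ℝ)/p) := Real.rpow_nonneg hC₂.le _
    have hRHS : (0:ℝ) ≤ (k:ℝ) ^ ((1:ℝ)/p) * x k := by positivity
    rw [← pow_le_pow_iff_left₀ hLHS hRHS hppos]
    rw [mul_pow, pow_rpow _ hC₂, k_rpow]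
    -- (pK₂ + y0)⁻¹ ≤ k * x k ^ p
    have hy : (x k ^ p)⁻¹ ≤ (k:ℝ) * ((p:ℝ) * K₂ + (x 0 ^ p)⁻¹) := by
      have h1k : (1:ℝ) ≤ (k:ℝ) := by exact_mod_cast hk1
      calc (x k ^ p)⁻¹ ≤ (x 0 ^ p)⁻¹ + p * K₂ * k := a2
        _ ≤ (k:ℝ) * ((p:ℝ) * K₂ + (x 0 ^ p)⁻¹) := by nlinarith [inv_pos.mpr hx0p]
    rw [inv_eq_one_div, div_le_iff₀ hC₂]
    calc (1:ℝ) ≤ (x k ^ p)⁻¹ * x k ^ p := by rw [inv_mul_cancel₀ hkp.ne']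
      _ ≤ ((k:ℝ) * ((p:ℝ) * K₂ + (x 0 ^ p)⁻¹)) * x k ^ p := by gcongr
      _ = (k:ℝ) * x k ^ p * ((p:ℝ) * K₂ + (x 0 ^ p)⁻¹) := by ring
  · have hLHS : (0:ℝ) ≤ (k:ℝ) ^ ((1:ℝ)/p) * x k := by positivity
    have hRHS : (0:ℝ) ≤ ((p:ℝ) * K₁) ^ (-(1:ℝ)/p) := Real.rpow_nonneg hC₁.le _
    rw [← pow_le_pow_iff_left₀ hLHS hRHS hppos]
    rw [mul_pow, pow_rpow _ hC₁, k_rpow]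
    -- k * x k ^ p ≤ (pK₁)⁻¹
    have hy : (p:ℝ) * K₁ * k ≤ (x k ^ p)⁻¹ := by linarith [a1, inv_pos.mpr hx0p]
    rw [inv_eq_one_div, le_div_iff₀ hC₁]
    have hyk : (0:ℝ) < (p:ℝ) * K₁ * k := by positivity
    calc (k:ℝ) * x k ^ p * ((p:ℝ) * K₁) = ((p:ℝ) * K₁ * k) * x k ^ p := by ring
      _ ≤ (x k ^ p)⁻¹ * x k ^ p := by gcongr
      _ = 1 := inv_mul_cancel₀ hkp.ne'
end

section
/- Let (u_n) be a decreasing sequence of real numbers and α, β, p > 0. If for all k ≤ n we have u_k − u_{k+1} ≤ α + β e^{p u_{k+1}}, then for all k ≤ n: (α / (α + β e^{p u_0}))^{1/p} · e^{−α k} ≤ e^{u_k − u_0}. -/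
/-!
Let `G x = x - log (α + β e^{p x}) / p`, an antiderivative of `α / (α + β e^{p x})`. For one step
`b - a ≤ α + β e^{p a}`, put `s = β e^{p a} / (α + β e^{p a})`; convexity of `exp` gives
`log ((α + β e^{p b}) / (α + β e^{p a})) ≥ s p (b - a)`, hence `G b - G a ≤ (1 - s) (b - a) ≤ α`.
Telescoping gives `G u₀ - G u_k ≤ α k`, and since `G x ≤ x - log α / p`, exponentiating yields the
bound.
-/

open Real

noncomputable def logisticAntideriv (α β p x : ℝ) : ℝ :=
  x - log (α + β * exp (p * x)) / p

lemma mul_le_log_one_sub_add_mul_exp {s : ℝ} (hs₀ : 0 ≤ s) (hs₁ : s ≤ 1) (t : ℝ) :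
    s * t ≤ log (1 - s + s * exp t) := by
  have hconv := convexOn_exp.2 (Set.mem_univ 0) (Set.mem_univ t) (sub_nonneg.2 hs₁) hs₀
    (sub_add_cancel 1 s)
  simp only [smul_eq_mul, mul_zero, zero_add, exp_zero, mul_one] at hconv
  simpa using log_le_log (exp_pos _) hconv

section

variable {α β p : ℝ}

lemma logisticAntideriv_le (hα : 0 < α) (hβ : 0 ≤ β) (hp : 0 < p) (x : ℝ) :
    logisticAntideriv α β p x ≤ x - log α / p := by
  have : log α ≤ log (α + β * exp (p * x)) := log_le_log hα (le_add_of_nonneg_right (by positivity))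
  unfold logisticAntideriv
  gcongr

lemma logisticAntideriv_sub_le (hα : 0 < α) (hβ : 0 ≤ β) (hp : 0 < p) {a b : ℝ}
    (hba : b - a ≤ α + β * exp (p * a)) :
    logisticAntideriv α β p b - logisticAntideriv α β p a ≤ α := by
  set D := α + β * exp (p * a)
  have hD : 0 < D := by positivity
  set s := β * exp (p * a) / D
  have hs₀ : 0 ≤ s := by positivity
  have hs₁ : s ≤ 1 := (div_le_one hD).2 (by simp only [D]; linarith)
  have hratio : (α + β * exp (p * b)) / D = 1 - s + s * exp (p * (b - a)) := by
    have : exp (p * b) = exp (p * a) * exp (p * (b - a)) := by rw [← exp_add]; ring_nf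
    simp only [s, this]
    field_simp
    ring
  have hlog : s * (b - a) ≤ (log (α + β * exp (p * b)) - log D) / p := by
    rw [← log_div (by positivity) hD.ne', hratio, le_div_iff₀ hp, mul_assoc, mul_comm (b - a)]
    exact mul_le_log_one_sub_add_mul_exp hs₀ hs₁ _
  have hα_eq : (1 - s) * D = α := by
    simp only [s]
    field_simp
    ring
  have hstep : (1 - s) * (b - a) ≤ α :=
    hα_eq ▸ mul_le_mul_of_nonneg_left hba (sub_nonneg.2 hs₁)
  unfold logisticAntideriv
  rw [sub_div] at hlog
  linarith

end

theorem stmt3_general (u : ℕ → ℝ) (α β p : ℝ)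
    (hα : 0 < α) (hβ : 0 < β) (hp : 0 < p) (n : ℕ)
    (h : ∀ k ≤ n, u k - u (k + 1) ≤ α + β * Real.exp (p * u (k + 1))) :
    ∀ k ≤ n,
      (α / (α + β * Real.exp (p * u 0))) ^ ((1 : ℝ) / p) * Real.exp (-α * k) ≤
        Real.exp (u k - u 0) := by
  intro k hk
  set G := fun i => logisticAntideriv α β p (u i)
  have htelescope : G 0 - G k ≤ k * α := by
    rw [← Finset.sum_range_sub' G k]
    simpa using Finset.sum_le_card_nsmul (Finset.range k) (fun i => G i - G (i + 1)) α fun i hi =>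
      logisticAntideriv_sub_le hα hβ.le hp (h i ((Finset.mem_range.1 hi).le.trans hk))
  have hGk := logisticAntideriv_le hα hβ.le hp (u k)
  have hD : 0 < α + β * exp (p * u 0) := by positivity
  rw [rpow_def_of_pos (div_pos hα hD), ← exp_add, exp_le_exp, log_div hα.ne' hD.ne']
  simp only [G, logisticAntideriv] at htelescope hGk
  have hsplit : (log α - log (α + β * exp (p * u 0))) * (1 / p) =
      log α / p - log (α + β * exp (p * u 0)) / p := by ring
  linarith

/-- Corollary `cor2`. If `(u_n)` is decreasing, `α, β, p > 0`, and
`u_k − u_{k+1} ≤ α + β e^{p u_{k+1}}` for all `k ≤ n`, then for all `k ≤ n`: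
`(α/(α + β e^{p u_0}))^{1/p} e^{−αk} ≤ e^{u_k − u_0}`. -/
theorem stmt3 (u : ℕ → ℝ) (hu : Antitone u) (α β p : ℝ)
    (hα : 0 < α) (hβ : 0 < β) (hp : 0 < p) (n : ℕ)
    (h : ∀ k ≤ n, u k - u (k + 1) ≤ α + β * Real.exp (p * u (k + 1))) :
    ∀ k ≤ n,
      (α / (α + β * Real.exp (p * u 0))) ^ ((1 : ℝ) / p) * Real.exp (-α * k) ≤
        Real.exp (u k - u 0) :=
  stmt3_general u α β p hα hβ hp n h
end

section
/- For every R > 0 there exists Δ > 0 such that for all λ > 1, the Julia set of f_λ(z) = λ(e^z − 1), with the union of balls B(2πni, R) over all integers n removed, is contained in the half-plane {z ∈ ℂ : Re z ≥ Δ}. -/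
open Complex Metric

/-- The Fatou set of an entire map: points having a neighborhood on which the family of
iterates is equicontinuous. -/
def fatouSet (f : ℂ → ℂ) : Set ℂ :=
  {z | ∃ U ∈ nhds z, EquicontinuousOn (fun n : ℕ => f^[n]) U}

/-- The Julia set: complement of the Fatou set. -/
def juliaSet (f : ℂ → ℂ) : Set ℂ := (fatouSet f)ᶜ

/-! For `λ > 0` the map `f_λ` sends the left half-plane into the disc `B(-λ, λ)`, which lies in
it again. So on the left half-plane all iterates from the first on are bounded by `2λ`, and
Cauchy's estimate makes them equicontinuous; hence every `z` with
`Re f_λ(z) = λ (e^{Re z} cos (Im z) - 1) < 0` is in the Fatou set. Near the imaginary axis but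
outside the balls `B(2πni, R)`, `cos (Im z)` stays below `cos (min (R/2) (π/2)) < 1`, which gives
`e^{Re z} cos (Im z) < 1` for `Re z < Δ` with `Δ` depending on `R` only. -/

open Filter Topology
open scoped Real

section Equicontinuity

variable {X α : Type*} [TopologicalSpace X] [UniformSpace α]

theorem EquicontinuousAt.of_succ {F : ℕ → X → α} {x : X}
    (h : EquicontinuousAt (fun n => F (n + 1)) x) (h₀ : ContinuousAt (F 0) x) :
    EquicontinuousAt F x := by
  intro U hU
  filter_upwards [h U hU, h₀.eventually (mem_nhds_left _ hU)] with y hy hy₀ n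
  cases n with
  | zero => exact hy₀
  | succ n => exact hy n

theorem EquicontinuousAt.comp_continuousAt {ι Y : Type*} [TopologicalSpace Y] {F : ι → X → α}
    {g : Y → X} {y : Y} (h : EquicontinuousAt F (g y)) (hg : ContinuousAt g y) :
    EquicontinuousAt (fun i => F i ∘ g) y :=
  fun U hU => hg.eventually (h U hU)

end Equicontinuity

theorem equicontinuousAt_of_differentiableOn_of_norm_le {ι E : Type*} [NormedAddCommGroup E]
    [NormedSpace ℂ E] {F : ι → ℂ → E} {U : Set ℂ} {M : ℝ} (hU : IsOpen U)
    (hF : ∀ i, DifferentiableOn ℂ (F i) U) (hM : ∀ i, ∀ z ∈ U, ‖F i z‖ ≤ M) {x : ℂ}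
    (hx : x ∈ U) : EquicontinuousAt F x := by
  obtain ⟨ε, hε, hball⟩ := Metric.isOpen_iff.1 hU x hx
  set r := ε / 2
  have hr : 0 < r := half_pos hε
  have hrε : r + r = ε := add_halves ε
  have hclosedBall : ∀ y ∈ ball x r, closedBall y r ⊆ U := fun y hy =>
    (closedBall_subset_ball' (by rw [mem_ball] at hy; linarith)).trans hball
  have hlip : ∀ i, LipschitzOnWith (M / r).toNNReal (F i) (ball x r) := fun i =>
    (convex_ball x r).lipschitzOnWith_of_nnnorm_deriv_le
      (fun y hy => (hF i).differentiableAt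
        (hU.mem_nhds (hclosedBall y hy (mem_closedBall_self hr.le))))
      (fun y hy => NNReal.le_toNNReal_of_coe_le <| norm_deriv_le_of_forall_mem_sphere_norm_le hr
        ((hF i).diffContOnCl_ball (hclosedBall y hy))
        (fun z hz => hM i z (hclosedBall y hy (sphere_subset_closedBall hz))))
  have hon :=
    (LipschitzOnWith.uniformEquicontinuousOn F _ hlip).equicontinuousOn x (mem_ball_self hr)
  exact equicontinuousAt_iff_continuousAt.2
    ((equicontinuousWithinAt_iff_continuousWithinAt.1 hon).continuousAt (ball_mem_nhds x hr))

noncomputable def expMap (lam : ℝ) (z : ℂ) : ℂ := lam * (exp z - 1)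

section ExpMap

variable {lam : ℝ}

theorem continuous_expMap (lam : ℝ) : Continuous (expMap lam) := by
  unfold expMap; fun_prop

theorem differentiable_expMap (lam : ℝ) : Differentiable ℂ (expMap lam) := by
  unfold expMap; fun_prop

theorem re_expMap (lam : ℝ) (z : ℂ) :
    (expMap lam z).re = lam * (Real.exp z.re * Real.cos z.im - 1) := by
  rw [expMap, re_ofReal_mul, sub_re, exp_re, one_re]

theorem expMap_mem_ball_of_re_neg (hlam : 0 < lam) {z : ℂ} (hz : z.re < 0) :
    expMap lam z ∈ ball (-lam : ℂ) lam := by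
  rw [mem_ball, dist_eq_norm, expMap, sub_neg_eq_add, mul_sub, mul_one, sub_add_cancel,
    norm_mul, norm_real, Real.norm_of_nonneg hlam.le, norm_exp]
  exact mul_lt_of_lt_one_right hlam (Real.exp_lt_one_iff.2 hz)

theorem re_neg_of_mem_ball_neg {w : ℂ} (hw : w ∈ ball (-lam : ℂ) lam) : w.re < 0 := by
  rw [mem_ball, dist_eq_norm, sub_neg_eq_add] at hw
  have := (abs_re_le_norm (w + lam)).trans_lt hw
  rw [add_re, ofReal_re] at this
  linarith [le_abs_self (w.re + lam)]

theorem iterate_succ_expMap_mem_ball (hlam : 0 < lam) {z : ℂ} (hz : z.re < 0) (n : ℕ) :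
    (expMap lam)^[n + 1] z ∈ ball (-lam : ℂ) lam := by
  induction n with
  | zero => exact expMap_mem_ball_of_re_neg hlam hz
  | succ n ih =>
    rw [Function.iterate_succ_apply']
    exact expMap_mem_ball_of_re_neg hlam (re_neg_of_mem_ball_neg ih)

theorem equicontinuousAt_iterate_succ_expMap (hlam : 0 < lam) {z : ℂ} (hz : z.re < 0) :
    EquicontinuousAt (fun n : ℕ => (expMap lam)^[n + 1]) z := by
  refine equicontinuousAt_of_differentiableOn_of_norm_le (M := 2 * lam)
    (isOpen_lt continuous_re continuous_const)
    (fun n => ((differentiable_expMap lam).iterate _).differentiableOn) (fun n w hw => ?_) hz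
  have := iterate_succ_expMap_mem_ball hlam hw n
  rw [mem_ball, dist_eq_norm, sub_neg_eq_add] at this
  calc ‖(expMap lam)^[n + 1] w‖ ≤ ‖(expMap lam)^[n + 1] w + lam‖ + ‖(lam : ℂ)‖ :=
        norm_le_add_norm_add _ _
    _ ≤ 2 * lam := by rw [norm_real, Real.norm_of_nonneg hlam.le]; linarith

theorem setOf_re_expMap_neg_subset_fatouSet (hlam : 0 < lam) :
    {z | (expMap lam z).re < 0} ⊆ fatouSet (expMap lam) := by
  intro z hz
  have hopen : IsOpen {z | (expMap lam z).re < 0} :=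
    isOpen_lt (continuous_re.comp (continuous_expMap lam)) continuous_const
  refine ⟨_, hopen.mem_nhds hz, fun w hw => EquicontinuousAt.equicontinuousWithinAt ?_ _⟩
  have hcont := (continuous_expMap lam).continuousAt (x := w)
  refine (EquicontinuousAt.of_succ (EquicontinuousAt.of_succ ?_ hcont) continuousAt_id)
  simpa only [Function.iterate_succ] using
    (equicontinuousAt_iterate_succ_expMap hlam hw).comp_continuousAt hcont

end ExpMap

theorem Real.cos_le_cos_of_le_abs_sub_two_pi_mul {d y : ℝ} (hd₀ : 0 ≤ d)
    (hy : ∀ n : ℤ, d ≤ |y - 2 * π * n|) : Real.cos y ≤ Real.cos d := by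
  set n : ℤ := round (y / (2 * π))
  have hπ : 0 < 2 * π := by positivity
  have hreduce : |y - 2 * π * n| ≤ π := by
    have h : y - 2 * π * n = 2 * π * (y / (2 * π) - n) := by field_simp
    rw [h, abs_mul, abs_of_pos hπ]
    nlinarith [abs_sub_round (y / (2 * π))]
  have hcos : Real.cos y = Real.cos |y - 2 * π * n| := by
    rw [Real.cos_abs, ← Real.cos_sub_int_mul_two_pi y n]
    ring_nf
  rw [hcos]
  exact Real.cos_le_cos_of_nonneg_of_le_pi hd₀ hreduce (hy n)

theorem le_abs_im_sub_of_le_dist {R t : ℝ} {z : ℂ} (hR : R ≤ dist z (t * I))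
    (hre : |z.re| ≤ R / 2) : R / 2 ≤ |z.im - t| := by
  have := (dist_eq_norm z (t * I)).symm ▸ hR |>.trans (norm_le_abs_re_add_abs_im _)
  simp only [sub_re, sub_im, re_ofReal_mul, im_ofReal_mul, I_re, I_im, mul_zero, mul_one,
    sub_zero] at this
  linarith

theorem exists_pos_forall_exp_re_mul_cos_im_lt_one {R : ℝ} (hR : 0 < R) :
    ∃ Δ > 0, ∀ z : ℂ, z.re < Δ → (∀ n : ℤ, R ≤ dist z ((2 * π * n : ℝ) * I)) →
      Real.exp z.re * Real.cos z.im < 1 := by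
  set d := min (R / 2) (π / 2)
  have hd₀ : 0 < d := lt_min (half_pos hR) (half_pos Real.pi_pos)
  have hcos_nonneg : 0 ≤ Real.cos d :=
    Real.cos_nonneg_of_mem_Icc ⟨by linarith [Real.pi_pos], min_le_right _ _⟩
  have hcos_lt : Real.cos d < 1 := by
    simpa using Real.cos_lt_cos_of_nonneg_of_le_pi le_rfl
      ((min_le_right _ _).trans (by linarith [Real.pi_pos])) hd₀
  have hsmall : ∀ᶠ Δ in 𝓝[>] (0 : ℝ), 0 < Δ ∧ Δ ≤ R / 2 ∧ Real.exp Δ * Real.cos d < 1 := by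
    refine eventually_mem_nhdsWithin.and (Filter.Eventually.and ?_ ?_)
    · exact nhdsWithin_le_nhds (eventually_le_nhds (half_pos hR))
    · refine nhdsWithin_le_nhds (ContinuousAt.eventually_lt (by fun_prop) continuousAt_const ?_)
      simpa using hcos_lt
  obtain ⟨Δ, hΔ₀, hΔR, hΔ⟩ := hsmall.exists
  refine ⟨Δ, hΔ₀, fun z hzΔ hzR => ?_⟩
  rcases lt_or_ge z.re 0 with hneg | hnonneg
  · calc Real.exp z.re * Real.cos z.im ≤ Real.exp z.re :=
          mul_le_of_le_one_right (Real.exp_pos _).le (Real.cos_le_one _)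
      _ < 1 := Real.exp_lt_one_iff.2 hneg
  have hre : |z.re| ≤ R / 2 := by rw [abs_of_nonneg hnonneg]; linarith
  have hcos : Real.cos z.im ≤ Real.cos d := Real.cos_le_cos_of_le_abs_sub_two_pi_mul hd₀.le
    fun n => (min_le_left _ _).trans (le_abs_im_sub_of_le_dist (hzR n) hre)
  calc Real.exp z.re * Real.cos z.im ≤ Real.exp z.re * Real.cos d :=
        mul_le_mul_of_nonneg_left hcos (Real.exp_pos _).le
    _ ≤ Real.exp Δ * Real.cos d :=
        mul_le_mul_of_nonneg_right (Real.exp_le_exp.2 hzΔ.le) hcos_nonneg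
    _ < 1 := hΔ

/-- For every `R > 0` there is `Δ > 0` such that for all `λ > 1` the Julia
set of `f_λ(z) = λ(e^z − 1)` minus the balls `B(2πni, R)`, `n ∈ ℤ`, lies in
`{Re z ≥ Δ}`. -/
theorem stmt4 :
    ∀ R : ℝ, 0 < R → ∃ Δ : ℝ, 0 < Δ ∧ ∀ lam : ℝ, 1 < lam →
      juliaSet (fun z : ℂ => lam * (Complex.exp z - 1)) \
          (⋃ n : ℤ, Metric.ball ((2 * Real.pi * n : ℝ) * Complex.I) R) ⊆
        {z : ℂ | Δ ≤ z.re} := by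
  intro R hR
  obtain ⟨Δ, hΔ, hstrip⟩ := exists_pos_forall_exp_re_mul_cos_im_lt_one hR
  refine ⟨Δ, hΔ, fun lam hlam z ⟨hzJ, hzB⟩ => ?_⟩
  by_contra hzΔ
  simp only [Set.mem_iUnion, mem_ball, not_exists, not_lt] at hzB
  have hlam₀ : 0 < lam := zero_lt_one.trans hlam
  refine hzJ (setOf_re_expMap_neg_subset_fatouSet hlam₀ ?_)
  show (expMap lam z).re < 0
  rw [re_expMap]
  exact mul_neg_of_pos_of_neg hlam₀ (sub_neg.2 (hstrip z (not_le.1 hzΔ) hzB))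
end

section
/- Consider the real orbit x_0 ∈ (0,1), x_{n+1} = f_ε^{-1}(x_n) for f_ε(x) = (1+ε)x + x^{p+1} + x^{p+2} g_ε(x) with |x g_ε(x)| < 1/2, ε < 1, and f_ε increasing on the interval. Then for all n, 1 ≤ x_n / x_{n+1} ≤ 2 + 2x_0^p ≤ 4, and there is a constant K such that x_n ≤ K n^{-1/p} for all n ∈ ℕ. -/
/-!
Writing the recurrence as `x_n / x_{n+1} = 1 + ε + x_{n+1}^p (1 + x_{n+1} g(x_{n+1}))` gives
the ratio bounds at once. Since `x_n ≤ 4 x_{n+1}`, the drop `x_n - x_{n+1} ≥ x_{n+1}^{p+1} / 2`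
is at least a fixed multiple `c x_n^{p+1}` of `x_n^{p+1}`. By Bernoulli's inequality,
`1 / x^p` then grows by at least `p c` per step, so `x_n^p ≤ 1 / (p c n)`.
-/

open Real

lemma natCast_mul_sub_div_pow_succ_le_one_div_pow_sub {a b : ℝ} (hb : 0 < b) (hba : b ≤ a)
    (p : ℕ) : p * (a - b) / a ^ (p + 1) ≤ 1 / b ^ p - 1 / a ^ p := by
  have ha : 0 < a := hb.trans_le hba
  have hbernoulli : 1 + p * (a / b - 1) ≤ (a / b) ^ p := by
    simpa using one_add_mul_le_pow (a := a / b - 1) (by linarith [(one_le_div hb).2 hba]) p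
  have hab : 0 ≤ a - b := sub_nonneg.2 hba
  calc p * (a - b) / a ^ (p + 1) ≤ p * (a - b) / (a ^ p * b) := by
        rw [pow_succ]; gcongr
    _ = p * (a / b - 1) / a ^ p := by field_simp
    _ ≤ ((a / b) ^ p - 1) / a ^ p := by gcongr; linarith
    _ = 1 / b ^ p - 1 / a ^ p := by rw [div_pow]; field_simp

lemma add_natCast_mul_le_of_add_le_succ {f : ℕ → ℝ} {c : ℝ} (h : ∀ n, f n + c ≤ f (n + 1))
    (n : ℕ) : f 0 + n * c ≤ f n := by
  induction n with
  | zero => simp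
  | succ n ih => push_cast; linarith [h n]

lemma le_rpow_mul_rpow_of_mul_le_one_div_pow {u C t : ℝ} {p : ℕ} (hp : p ≠ 0) (hu : 0 < u)
    (hC : 0 < C) (ht : 0 < t) (h : C * t ≤ 1 / u ^ p) :
    u ≤ C ^ (-(1 : ℝ) / p) * t ^ (-(1 : ℝ) / p) := by
  rw [← mul_rpow hC.le ht.le, neg_div, rpow_neg (by positivity), ← inv_rpow (by positivity),
    one_div, le_rpow_inv_iff_of_pos hu.le (by positivity) (by positivity), rpow_natCast]
  exact (le_inv_comm₀ (by positivity) (by positivity)).1 (by simpa using h)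

theorem exists_le_mul_rpow_of_mul_pow_succ_le_sub {u : ℕ → ℝ} {c : ℝ} {p : ℕ} (hp : p ≠ 0)
    (hc : 0 < c) (hpos : ∀ n, 0 < u n) (hstep : ∀ n, c * u n ^ (p + 1) ≤ u n - u (n + 1)) :
    ∃ K : ℝ, 0 < K ∧ ∀ n : ℕ, 1 ≤ n → u n ≤ K * (n : ℝ) ^ (-(1 : ℝ) / p) := by
  have hgrowth (n : ℕ) : 1 / u n ^ p + p * c ≤ 1 / u (n + 1) ^ p := by
    have hdrop : 0 < c * u n ^ (p + 1) := mul_pos hc (pow_pos (hpos n) _)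
    have hbernoulli := natCast_mul_sub_div_pow_succ_le_one_div_pow_sub (hpos (n + 1))
      (show u (n + 1) ≤ u n by linarith [hstep n]) p
    have : p * c ≤ p * (u n - u (n + 1)) / u n ^ (p + 1) := by
      rw [le_div_iff₀ (pow_pos (hpos n) _), mul_assoc]
      gcongr
      exact hstep n
    linarith
  refine ⟨(p * c) ^ (-(1 : ℝ) / p), by positivity, fun n hn => ?_⟩
  refine le_rpow_mul_rpow_of_mul_le_one_div_pow hp (hpos n) (by positivity) (by positivity) ?_
  have := add_natCast_mul_le_of_add_le_succ hgrowth n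
  have : 0 ≤ 1 / u 0 ^ p := by have := hpos 0; positivity
  linarith

section OrbitStep

variable {ε s a b : ℝ} {p : ℕ}

lemma div_le_two_add_two_mul_pow (hb : 0 < b) (hs : |s| < 1 / 2)
    (ha : a = (1 + ε) * b + b ^ (p + 1) * (1 + s)) (hε : ε ≤ 1) : a / b ≤ 2 + 2 * b ^ p := by
  have hbp := pow_pos hb p
  have hs' := abs_lt.1 hs
  rw [div_le_iff₀ hb, ha, pow_succ]
  nlinarith [mul_pos hbp hb]

lemma inv_two_mul_four_pow_mul_pow_le_sub (hb : 0 < b) (hs : |s| < 1 / 2)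
    (ha : a = (1 + ε) * b + b ^ (p + 1) * (1 + s)) (hε : 0 ≤ ε) (h4 : a ≤ 4 * b) :
    (2 * 4 ^ (p + 1))⁻¹ * a ^ (p + 1) ≤ a - b := by
  have hbp := pow_pos hb (p + 1)
  have hdrop : b ^ (p + 1) / 2 ≤ a - b := by
    have hs' := abs_lt.1 hs
    rw [ha]
    nlinarith [mul_nonneg hε hb.le]
  calc (2 * 4 ^ (p + 1))⁻¹ * a ^ (p + 1) = (a / 4) ^ (p + 1) / 2 := by
        rw [div_pow]; field_simp
    _ ≤ b ^ (p + 1) / 2 := by gcongr <;> linarith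
    _ ≤ a - b := hdrop

end OrbitStep

theorem stmt13_general (p : ℕ) (hp : 1 ≤ p) (ε : ℝ) (hε : 0 < ε) (hε1 : ε < 1)
    (g : ℝ → ℝ) (x : ℕ → ℝ)
    (hx01 : x 0 < 1)
    (hpos : ∀ n, 0 < x n) (hanti : StrictAnti x)
    (hg : ∀ n, |x (n + 1) * g (x (n + 1))| < 1 / 2)
    (hrec : ∀ n, x n = (1 + ε) * x (n + 1) +
      x (n + 1) ^ (p + 1) * (1 + x (n + 1) * g (x (n + 1)))) :
    (∀ n, 1 ≤ x n / x (n + 1) ∧ x n / x (n + 1) ≤ 2 + 2 * x 0 ^ p ∧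
      2 + 2 * x 0 ^ p ≤ 4) ∧
    ∃ K : ℝ, 0 < K ∧ ∀ n : ℕ, 1 ≤ n → x n ≤ K * (n : ℝ) ^ (-(1 : ℝ) / p) := by
  have hratio (n : ℕ) : 1 ≤ x n / x (n + 1) ∧ x n / x (n + 1) ≤ 2 + 2 * x 0 ^ p ∧
      2 + 2 * x 0 ^ p ≤ 4 := by
    have hpow : x (n + 1) ^ p ≤ x 0 ^ p :=
      pow_le_pow_left₀ (hpos _).le (hanti.antitone (Nat.zero_le _)) p
    refine ⟨(one_le_div (hpos _)).2 (hanti n.lt_succ_self).le, ?_, ?_⟩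
    · linarith [div_le_two_add_two_mul_pow (hpos _) (hg n) (hrec n) hε1.le]
    · linarith [pow_le_one₀ (hpos 0).le hx01.le (n := p)]
  refine ⟨hratio, exists_le_mul_rpow_of_mul_pow_succ_le_sub (by omega) (by positivity) hpos
    fun n => inv_two_mul_four_pow_mul_pow_le_sub (hpos _) (hg n) (hrec n) hε.le ?_⟩
  exact (div_le_iff₀ (hpos _)).1 ((hratio n).2.1.trans (hratio n).2.2)

/-- For the real backward orbit `x_{n+1} = f_ε^{-1}(x_n)` of
`f_ε(x) = (1+ε)x + x^{p+1} + x^{p+2}g_ε(x)` with `|x g_ε(x)| < 1/2`, `ε < 1`,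
`x_0 ∈ (0,1)`: the ratios satisfy `1 ≤ x_n/x_{n+1} ≤ 2 + 2x_0^p ≤ 4`, and there is a
constant `K` with `x_n ≤ K n^{−1/p}` for all `n ≥ 1`. -/
theorem stmt13 (p : ℕ) (hp : 1 ≤ p) (ε : ℝ) (hε : 0 < ε) (hε1 : ε < 1)
    (g : ℝ → ℝ) (x : ℕ → ℝ)
    (hx0 : 0 < x 0) (hx01 : x 0 < 1)
    (hpos : ∀ n, 0 < x n) (hanti : StrictAnti x)
    (hg : ∀ n, |x (n + 1) * g (x (n + 1))| < 1 / 2)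
    (hrec : ∀ n, x n = (1 + ε) * x (n + 1) +
      x (n + 1) ^ (p + 1) * (1 + x (n + 1) * g (x (n + 1)))) :
    (∀ n, 1 ≤ x n / x (n + 1) ∧ x n / x (n + 1) ≤ 2 + 2 * x 0 ^ p ∧
      2 + 2 * x 0 ^ p ≤ 4) ∧
    ∃ K : ℝ, 0 < K ∧ ∀ n : ℕ, 1 ≤ n → x n ≤ K * (n : ℝ) ^ (-(1 : ℝ) / p) :=
  stmt13_general p hp ε hε hε1 g x hx01 hpos hanti hg hrec
end

section
/- In the setting of the real orbit x_{n+1} = f_ε^{-1}(x_n) of f_ε(x) = (1+ε)x + x^{p+1} + x^{p+2}g_ε(x), with |x g_ε(x)| < 1/2 and ε small, there is a constant K ≥ 1 independent of ε such that K^{-1} ε^{1/p}(1+ε)^{-n} ≤ x_n for all n ∈ ℕ. -/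
set_option maxHeartbeats 1600000 in
/-- lower bound for the real backward orbit. With `x_0 ∈ (0,1)` fixed,
there are `ε₀ > 0` and `K ≥ 1` (independent of `ε`) such that for every `0 < ε < ε₀`
and every orbit `x_n = (1+ε)x_{n+1} + x_{n+1}^{p+1}(1 + x_{n+1}g_ε(x_{n+1}))` with
`|x g_ε(x)| < 1/2`, one has `K⁻¹ ε^{1/p} (1+ε)^{−n} ≤ x_n` for all `n`. -/
theorem stmt14 (p : ℕ) (hp : 1 ≤ p) (x₀ : ℝ) (hx₀ : 0 < x₀) (hx₀1 : x₀ < 1) :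
    ∃ ε₀ : ℝ, 0 < ε₀ ∧ ∃ K : ℝ, 1 ≤ K ∧
      ∀ ε : ℝ, 0 < ε → ε < ε₀ → ∀ g : ℝ → ℝ, ∀ x : ℕ → ℝ,
        x 0 = x₀ → (∀ n, 0 < x n) → StrictAnti x →
        (∀ n, |x (n + 1) * g (x (n + 1))| < 1 / 2) →
        (∀ n, x n = (1 + ε) * x (n + 1) +
          x (n + 1) ^ (p + 1) * (1 + x (n + 1) * g (x (n + 1)))) →
        ∀ n : ℕ, K⁻¹ * ε ^ ((1 : ℝ) / p) * (1 + ε) ^ (-(n : ℝ)) ≤ x n := by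
  classical
  refine ⟨1/3, by norm_num, 16 / x₀, ?_, ?_⟩
  · rw [le_div_iff₀ hx₀]; nlinarith
  intro ε hε hε3 g x hx0 hpos hanti hg hrec n
  obtain ⟨a, ha⟩ : ∃ y : ℝ, y = 1 + ε := ⟨_, rfl⟩
  rw [← ha] at hrec ⊢
  have ha1 : (1:ℝ) ≤ a := by rw [ha]; linarith
  have ha0 : (0:ℝ) < a := by linarith
  have hone : ∀ k : ℕ, (1:ℝ) ≤ a ^ k := by
    intro k
    calc (1:ℝ) = a ^ 0 := (pow_zero a).symm
      _ ≤ a ^ k := pow_le_pow_right₀ ha1 (Nat.zero_le k)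
  have hp0 : (p:ℝ) ≠ 0 := Nat.cast_ne_zero.mpr (by omega)
  obtain ⟨t, htdef⟩ : ∃ y : ℝ, y = ε ^ ((1:ℝ)/p) := ⟨_, rfl⟩
  rw [← htdef]
  have ht0 : 0 < t := htdef ▸ Real.rpow_pos_of_pos hε _
  have htp : t ^ p = ε := by
    rw [htdef, ← Real.rpow_natCast (ε ^ ((1:ℝ)/p)) p, ← Real.rpow_mul hε.le]
    rw [one_div, inv_mul_cancel₀ hp0, Real.rpow_one]
  have ht1 : t < 1 := htdef ▸ Real.rpow_lt_one hε.le (by linarith) (by positivity)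
  -- Lemma A: one-step geometric decay
  have hA : ∀ j, a * x (j+1) ≤ x j := by
    intro j
    have h2 := abs_lt.mp (hg j)
    have hprod : 0 < x (j+1) ^ (p+1) * (1 + x (j+1) * g (x (j+1))) :=
      mul_pos (pow_pos (hpos (j+1)) (p+1)) (by linarith [h2.1])
    linarith [hrec j]
  -- Lemma B: iterated geometric decay
  have hB : ∀ j m, a ^ m * x (j + m) ≤ x j := by
    intro j m
    induction m with
    | zero => simp
    | succ m ih =>
      have h1 := hA (j + m)
      have hnn : (0:ℝ) ≤ a ^ m := by positivity
      calc a ^ (m+1) * x (j + (m+1)) = a ^ m * (a * x (j + m + 1)) := by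
            rw [show j + (m+1) = j + m + 1 from rfl]; ring
        _ ≤ a ^ m * x (j + m) := mul_le_mul_of_nonneg_left h1 hnn
        _ ≤ x j := ih
  -- Lemma C: one-step upper control
  have hC : ∀ k, x k ≤ a * x (k+1) * (1 + 3/2 * x (k+1) ^ p) := by
    intro k
    have h2 := abs_lt.mp (hg k)
    have hx := (hpos (k+1)).le
    have hr := hrec k
    rw [pow_succ] at hr
    have hpnn : (0:ℝ) ≤ x (k+1) ^ p := pow_nonneg hx p
    nlinarith [mul_nonneg hpnn hx, h2.2, hε]
  rw [Real.rpow_neg ha0.le, Real.rpow_natCast, inv_div]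
  by_cases hcase : x n < t
  · have hex : ∃ k, x k < t := ⟨n, hcase⟩
    obtain ⟨N, hN, hmin⟩ : ∃ N, x N < t ∧ ∀ k, k < N → t ≤ x k :=
      ⟨Nat.find hex, Nat.find_spec hex, fun k hk => not_lt.mp (Nat.find_min hex hk)⟩
    have hNn : N ≤ n := by
      by_contra h
      exact absurd hcase (not_lt.mpr (hmin n (by omega)))
    -- key multiplicative estimate
    have key : ∀ m, x N ≤ x (N + m) * a ^ m * Real.exp (3/2 * (1 - (a ^ m)⁻¹)) := by
      intro m
      induction m with
      | zero => simp
      | succ m ih =>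
        have hy0 : 0 < x (N + m + 1) := hpos _
        have hapos : (0:ℝ) < a ^ (m+1) := pow_pos ha0 _
        have hyb : x (N + m + 1) ≤ t * (a ^ (m+1))⁻¹ := by
          have h1 := hB N (m+1)
          rw [show N + (m+1) = N + m + 1 from rfl] at h1
          have h2 : x (N + m + 1) ≤ x N * (a ^ (m+1))⁻¹ := by
            rw [← div_eq_mul_inv, le_div_iff₀ hapos]; linarith
          have h3 : x N * (a ^ (m+1))⁻¹ ≤ t * (a ^ (m+1))⁻¹ :=
            mul_le_mul_of_nonneg_right hN.le (by positivity)
          linarith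
        have hyp : x (N + m + 1) ^ p ≤ ε * (a ^ (m+1))⁻¹ := by
          have h3 : a ^ (m+1) ≤ (a ^ (m+1)) ^ p := le_self_pow₀ (hone (m+1)) (by omega)
          have h4 : ((a ^ (m+1)) ^ p)⁻¹ ≤ (a ^ (m+1))⁻¹ := inv_anti₀ hapos h3
          calc x (N + m + 1) ^ p ≤ (t * (a ^ (m+1))⁻¹) ^ p := pow_le_pow_left₀ hy0.le hyb p
            _ = ε * ((a ^ (m+1)) ^ p)⁻¹ := by rw [mul_pow, htp, inv_pow]
            _ ≤ ε * (a ^ (m+1))⁻¹ := mul_le_mul_of_nonneg_left h4 hε.le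
        have hexp1 : 1 + 3/2 * x (N + m + 1) ^ p ≤ Real.exp (3/2 * x (N + m + 1) ^ p) := by
          linarith [Real.add_one_le_exp (3/2 * x (N + m + 1) ^ p)]
        have step : x (N + m) ≤ a * x (N + m + 1) * Real.exp (3/2 * (ε * (a ^ (m+1))⁻¹)) := by
          calc x (N + m) ≤ a * x (N + m + 1) * (1 + 3/2 * x (N + m + 1) ^ p) := hC (N + m)
            _ ≤ a * x (N + m + 1) * Real.exp (3/2 * x (N + m + 1) ^ p) :=
                mul_le_mul_of_nonneg_left hexp1 (by positivity)
            _ ≤ a * x (N + m + 1) * Real.exp (3/2 * (ε * (a ^ (m+1))⁻¹)) := by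
                apply mul_le_mul_of_nonneg_left (Real.exp_le_exp.mpr (by nlinarith)) (by positivity)
        have harith : 3/2 * (ε * (a ^ (m+1))⁻¹) + 3/2 * (1 - (a ^ m)⁻¹)
            = 3/2 * (1 - (a ^ (m+1))⁻¹) := by
          have hane : a ≠ 0 := ne_of_gt ha0
          rw [ha]
          field_simp
          ring
        calc x N ≤ x (N + m) * a ^ m * Real.exp (3/2 * (1 - (a ^ m)⁻¹)) := ih
          _ ≤ (a * x (N + m + 1) * Real.exp (3/2 * (ε * (a ^ (m+1))⁻¹))) * a ^ m
                * Real.exp (3/2 * (1 - (a ^ m)⁻¹)) := by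
              apply mul_le_mul_of_nonneg_right
                (mul_le_mul_of_nonneg_right step (by positivity)) (Real.exp_nonneg _)
          _ = x (N + (m+1)) * a ^ (m+1) * Real.exp (3/2 * (1 - (a ^ (m+1))⁻¹)) := by
              rw [show N + (m+1) = N + m + 1 from rfl, ← harith, Real.exp_add]; ring
    -- lower bound on x N
    have hxN : x₀ * t / 2 ≤ x N := by
      rcases Nat.eq_zero_or_pos N with h0 | hNpos
      · rw [h0, hx0]; nlinarith
      · obtain ⟨M, hM⟩ : ∃ M, N = M + 1 := ⟨N - 1, by omega⟩
        have htM : t ≤ x M := hmin M (by omega)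
        have hCM := hC M
        rw [← hM] at hCM
        have hxNp : x N ^ p ≤ ε := by
          calc x N ^ p ≤ t ^ p := pow_le_pow_left₀ (hpos N).le hN.le p
            _ = ε := htp
        have hxNpos := hpos N
        have s1 : a * x N * (1 + 3/2 * x N ^ p) ≤ a * x N * (1 + 3/2 * ε) := by
          apply mul_le_mul_of_nonneg_left (by linarith) (by positivity)
        have s2 : a * x N * (1 + 3/2 * ε) = ((1+ε) * (1 + 3/2 * ε)) * x N := by
          rw [ha]; ring
        have s3 : (1+ε) * (1 + 3/2 * ε) ≤ 2 := by
          nlinarith [mul_nonneg (show (0:ℝ) ≤ 1/3 - ε by linarith) hε.le]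
        have s4 : ((1+ε) * (1 + 3/2 * ε)) * x N ≤ 2 * x N :=
          mul_le_mul_of_nonneg_right s3 hxNpos.le
        have h2 : t ≤ 2 * x N := by linarith
        have s5 : x₀ * t ≤ t := by
          nlinarith [mul_nonneg (show (0:ℝ) ≤ 1 - x₀ by linarith) ht0.le]
        linarith
    -- assemble
    obtain ⟨m, hm⟩ : ∃ m, n = N + m := ⟨n - N, by omega⟩
    have hE : Real.exp (3/2 * (1 - (a ^ m)⁻¹)) ≤ 8 := by
      have hinv : (0:ℝ) ≤ (a ^ m)⁻¹ := by positivity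
      have h1 : 3/2 * (1 - (a ^ m)⁻¹) ≤ 2 := by nlinarith
      calc Real.exp (3/2 * (1 - (a ^ m)⁻¹)) ≤ Real.exp 2 := Real.exp_le_exp.mpr h1
        _ = Real.exp 1 * Real.exp 1 := by rw [← Real.exp_add]; norm_num
        _ ≤ 8 := by nlinarith [Real.exp_one_lt_d9, Real.exp_pos 1]
    have hxm : x N ≤ x (N + m) * a ^ m * 8 := by
      calc x N ≤ x (N + m) * a ^ m * Real.exp (3/2 * (1 - (a ^ m)⁻¹)) := key m
        _ ≤ x (N + m) * a ^ m * 8 := by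
            apply mul_le_mul_of_nonneg_left hE
            have := (hpos (N + m)).le
            positivity
    have h16 : x₀ * t / 16 ≤ x (N + m) * a ^ m := by linarith
    have hdiv : x₀ * t / 16 * (a ^ m)⁻¹ ≤ x (N + m) := by
      rw [← div_eq_mul_inv, div_le_iff₀ (pow_pos ha0 m)]
      linarith
    have hmn : (a ^ n)⁻¹ ≤ (a ^ m)⁻¹ := by
      apply inv_anti₀ (pow_pos ha0 m)
      exact pow_le_pow_right₀ ha1 (by omega)
    have hxn : x n = x (N + m) := by rw [hm]
    rw [hxn]
    calc x₀ / 16 * t * (a ^ n)⁻¹ ≤ x₀ / 16 * t * (a ^ m)⁻¹ := by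
          apply mul_le_mul_of_nonneg_left hmn (by positivity)
      _ = x₀ * t / 16 * (a ^ m)⁻¹ := by ring
      _ ≤ x (N + m) := hdiv
  · push_neg at hcase
    have h2 : (a ^ n)⁻¹ ≤ 1 := inv_le_one_of_one_le₀ (hone n)
    calc x₀ / 16 * t * (a ^ n)⁻¹ ≤ x₀ / 16 * t * 1 := by
          apply mul_le_mul_of_nonneg_left h2 (by positivity)
      _ ≤ t := by nlinarith
      _ ≤ x n := hcase
end

section
/- With a_n and S as above, for α > 1 and n ≤ N_ε the tail sum satisfies c₁ n^{1−α} ≤ S_{n,∞}(α) ≤ c₂ n^{1−α} for constants c₁, c₂ > 0 depending only on α and the constant K in K^{-1} ≤ ε N_ε ≤ K, independent of ε and n. -/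
open Finset

/-!
On the tail `j ≥ n` one has `0 ≤ a_j ≤ 1/j` (for `j > N_ε` by Bernoulli, `(1+ε)^j ≥ 1 + jε`), so the
tail sum is dominated by the `p`-series tail `∑_{j≥n} j^{-α} ≤ α/(α-1) · n^{1-α}` (integral test).
Conversely `a_j ≥ c/j` for all `j ≤ 2N_ε` with `c = e^{-2K}/K`, because `(1+ε)^j ≤ e^{εj} ≤ e^{2K}`
and `ε ≥ 1/(K N_ε)`; as `n ≤ N_ε`, the block `n ≤ j < 2n` alone contributes `n (c/(2n))^α`.
-/

theorem summable_nat_add_rpow_neg {α : ℝ} (hα : 1 < α) (n : ℕ) :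
    Summable fun j : ℕ => ((n + j : ℕ) : ℝ) ^ (-α) := by
  simpa only [add_comm n] using
    (summable_nat_add_iff n).mpr (Real.summable_nat_rpow.mpr (by linarith : -α < -1))

theorem tsum_nat_add_rpow_neg_le {α : ℝ} (hα : 1 < α) {n : ℕ} (hn : 1 ≤ n) :
    ∑' j : ℕ, ((n + j : ℕ) : ℝ) ^ (-α) ≤ α / (α - 1) * (n : ℝ) ^ (1 - α) := by
  have hn0 : (0 : ℝ) < n := by exact_mod_cast hn
  have hrest : ∑' k : ℕ, ((n + (k + 1) : ℕ) : ℝ) ^ (-α) ≤ (n : ℝ) ^ (1 - α) / (α - 1) := by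
    have hanti : AntitoneOn (fun x : ℝ => x ^ (-α)) (Set.Ici (n : ℝ)) :=
      (Real.antitoneOn_rpow_Ioi_of_exponent_nonpos (by linarith)).mono
        fun x hx => lt_of_lt_of_le hn0 hx
    have h := hanti.tsum_comp_add_le_integral n (integrableOn_Ioi_rpow_of_lt (by linarith) hn0)
      fun x hx => Real.rpow_nonneg (hn0.trans hx).le _
    rw [integral_Ioi_rpow_of_lt (by linarith) hn0] at h
    convert h using 1
    · simp only [add_right_comm, add_comm n]
    rw [show -α + 1 = 1 - α by ring, neg_div, ← div_neg, neg_sub]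
  have hfirst : (n : ℝ) ^ (-α) ≤ (n : ℝ) ^ (1 - α) :=
    Real.rpow_le_rpow_of_exponent_le (by exact_mod_cast hn) (by linarith)
  have hsplit : α / (α - 1) * (n : ℝ) ^ (1 - α) =
      (n : ℝ) ^ (1 - α) + (n : ℝ) ^ (1 - α) / (α - 1) := by
    field_simp [(by linarith : α - 1 ≠ 0)]
    ring
  rw [(summable_nat_add_rpow_neg hα n).tsum_eq_zero_add, hsplit]
  simp only [add_zero]
  linarith

theorem Real.rpow_le_rpow_neg_of_le_one_div {x y α : ℝ} (hα : 0 ≤ α) (hx : 0 ≤ x) (hy : 0 ≤ y)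
    (h : x ≤ 1 / y) : x ^ α ≤ y ^ (-α) := by
  calc x ^ α ≤ (1 / y) ^ α := Real.rpow_le_rpow hx h hα
    _ = y ^ (-α) := by rw [one_div, Real.inv_rpow hy, Real.rpow_neg hy]

section Comparison

variable {α : ℝ} {a : ℕ → ℝ} {n : ℕ}

theorem summable_rpow_nat_add_of_le_one_div (hα : 1 < α) (h0 : ∀ j, 0 ≤ a (n + j))
    (h1 : ∀ j, a (n + j) ≤ 1 / (n + j : ℕ)) : Summable fun j => a (n + j) ^ α :=
  (summable_nat_add_rpow_neg hα n).of_nonneg_of_le (fun j => Real.rpow_nonneg (h0 j) α)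
    fun j => Real.rpow_le_rpow_neg_of_le_one_div (by linarith) (h0 j) (Nat.cast_nonneg _) (h1 j)

theorem tsum_rpow_nat_add_le_of_le_one_div (hα : 1 < α) (hn : 1 ≤ n) (h0 : ∀ j, 0 ≤ a (n + j))
    (h1 : ∀ j, a (n + j) ≤ 1 / (n + j : ℕ)) :
    ∑' j, a (n + j) ^ α ≤ α / (α - 1) * (n : ℝ) ^ (1 - α) :=
  ((summable_rpow_nat_add_of_le_one_div hα h0 h1).tsum_le_tsum
    (fun j => Real.rpow_le_rpow_neg_of_le_one_div (by linarith) (h0 j) (Nat.cast_nonneg _) (h1 j))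
    (summable_nat_add_rpow_neg hα n)).trans (tsum_nat_add_rpow_neg_le hα hn)

theorem le_tsum_rpow_nat_add_of_div_le {c : ℝ} (hα : 0 ≤ α) (hc : 0 ≤ c) (hn : 1 ≤ n)
    (hs : Summable fun j => a (n + j) ^ α) (h0 : ∀ j, 0 ≤ a (n + j))
    (hlow : ∀ j < n, c / (n + j : ℕ) ≤ a (n + j)) :
    (c / 2) ^ α * (n : ℝ) ^ (1 - α) ≤ ∑' j, a (n + j) ^ α := by
  have hn0 : (0 : ℝ) < n := by exact_mod_cast hn
  calc (c / 2) ^ α * (n : ℝ) ^ (1 - α) = ∑ _j ∈ range n, (c / (2 * n)) ^ α := by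
        rw [sum_const, card_range, nsmul_eq_mul, Real.rpow_sub hn0, Real.rpow_one,
          show c / (2 * n) = c / 2 / n by ring, Real.div_rpow (by positivity) hn0.le]
        field_simp
    _ ≤ ∑ j ∈ range n, a (n + j) ^ α := by
        refine sum_le_sum fun j hj => Real.rpow_le_rpow (by positivity) ?_ hα
        refine (div_le_div_of_nonneg_left hc (by positivity) ?_).trans (hlow j (mem_range.mp hj))
        have : j < n := mem_range.mp hj
        push_cast
        linarith [(Nat.cast_le.mpr this.le : (j : ℝ) ≤ n)]
    _ ≤ ∑' j, a (n + j) ^ α := hs.sum_le_tsum _ fun j _ => Real.rpow_nonneg (h0 j) α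

end Comparison

theorem mul_one_add_rpow_neg_le_one_div {ε : ℝ} (hε : 0 < ε) {j : ℕ} (hj : 1 ≤ j) :
    ε * (1 + ε) ^ (-(j : ℝ)) ≤ 1 / j := by
  have hj0 : (0 : ℝ) < j := by exact_mod_cast hj
  rw [Real.rpow_neg (by positivity), Real.rpow_natCast, ← div_eq_mul_inv,
    div_le_div_iff₀ (by positivity) hj0]
  linarith [one_add_mul_le_pow (a := ε) (by linarith) j]

theorem exp_neg_two_mul_div_le_mul_one_add_rpow_neg {ε K : ℝ} {N j : ℕ} (hε : 0 < ε)
    (hlb : K⁻¹ ≤ ε * N) (hub : ε * N ≤ K) (hNj : N < j) (hj : j ≤ 2 * N) :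
    Real.exp (-(2 * K)) / K / j ≤ ε * (1 + ε) ^ (-(j : ℝ)) := by
  have hj0 : (0 : ℝ) < j := by exact_mod_cast (Nat.zero_le N).trans_lt hNj
  have hNj' : (N : ℝ) ≤ j := by exact_mod_cast hNj.le
  have hj' : (j : ℝ) ≤ 2 * N := by exact_mod_cast hj
  have hpow : (1 + ε) ^ j ≤ Real.exp (2 * K) :=
    calc (1 + ε) ^ j ≤ Real.exp ε ^ j :=
          pow_le_pow_left₀ (by positivity) (by linarith [Real.add_one_le_exp ε]) j
      _ = Real.exp (j * ε) := (Real.exp_nat_mul ε j).symm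
      _ ≤ Real.exp (2 * K) := Real.exp_le_exp.mpr (by nlinarith)
  have hKj : K⁻¹ / j ≤ ε := by
    rw [div_le_iff₀ hj0]
    nlinarith
  calc Real.exp (-(2 * K)) / K / j = Real.exp (-(2 * K)) * (K⁻¹ / j) := by ring
    _ ≤ (Real.exp (2 * K))⁻¹ * ε := by
        rw [Real.exp_neg]
        exact mul_le_mul_of_nonneg_left hKj (by positivity)
    _ ≤ ((1 + ε) ^ j)⁻¹ * ε := by gcongr
    _ = ε * (1 + ε) ^ (-(j : ℝ)) := by
        rw [Real.rpow_neg (by positivity), Real.rpow_natCast, mul_comm]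

/-- tail sums in the polynomial regime, `α > 1`. With `a_n = 1/n` for
`n ≤ N_ε` and `a_n = ε(1+ε)^{−n}` for `n > N_ε`, `K⁻¹ ≤ εN_ε ≤ K`, there are
`c₁, c₂ > 0` depending only on `α` and `K` such that for `1 ≤ n ≤ N_ε`:
`c₁ n^{1−α} ≤ Σ_{j≥n} a_j^α ≤ c₂ n^{1−α}`. -/
theorem stmt17 (α : ℝ) (hα : 1 < α) (K : ℝ) (hK : 1 ≤ K) :
    ∃ c₁ : ℝ, 0 < c₁ ∧ ∃ c₂ : ℝ, 0 < c₂ ∧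
      ∀ ε : ℝ, 0 < ε → ε < 1 → ∀ Nε : ℕ, 1 ≤ Nε →
        K⁻¹ ≤ ε * Nε → ε * Nε ≤ K → ∀ a : ℕ → ℝ,
        (∀ n : ℕ, 1 ≤ n → n ≤ Nε → a n = 1 / n) →
        (∀ n : ℕ, Nε < n → a n = ε * (1 + ε) ^ (-(n : ℝ))) →
        ∀ n : ℕ, 1 ≤ n → n ≤ Nε →
          c₁ * (n : ℝ) ^ (1 - α) ≤ (∑' j : ℕ, a (n + j) ^ α) ∧
          (∑' j : ℕ, a (n + j) ^ α) ≤ c₂ * (n : ℝ) ^ (1 - α) := by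
  have hK0 : 0 < K := by linarith
  set c := Real.exp (-(2 * K)) / K
  have hc0 : 0 < c := by positivity
  have hc1 : c ≤ 1 := by
    rw [div_le_one hK0]
    exact (Real.exp_le_one_iff.mpr (by linarith)).trans hK
  refine ⟨(c / 2) ^ α, by positivity, α / (α - 1), div_pos (by linarith) (by linarith), ?_⟩
  intro ε hε _ Nε _ hlb hub a hpoly hexp n hn hnN
  have hpos : ∀ j, 0 ≤ a (n + j) := by
    intro j
    rcases le_or_gt (n + j) Nε with h | h
    · rw [hpoly _ (by omega) h]; positivity
    · rw [hexp _ h]; positivity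
  have hle : ∀ j, a (n + j) ≤ 1 / (n + j : ℕ) := by
    intro j
    rcases le_or_gt (n + j) Nε with h | h
    · rw [hpoly _ (by omega) h]
    · rw [hexp _ h]; exact mul_one_add_rpow_neg_le_one_div hε (by omega)
  have hge : ∀ j < n, c / (n + j : ℕ) ≤ a (n + j) := by
    intro j hj
    rcases le_or_gt (n + j) Nε with h | h
    · rw [hpoly _ (by omega) h]
      exact div_le_div_of_nonneg_right hc1 (Nat.cast_nonneg _)
    · rw [hexp _ h]
      exact exp_neg_two_mul_div_le_mul_one_add_rpow_neg hε hlb hub h (by omega)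
  exact ⟨le_tsum_rpow_nat_add_of_div_le (by linarith) hc0.le hn
      (summable_rpow_nat_add_of_le_one_div hα hpos hle) hpos hge,
    tsum_rpow_nat_add_le_of_le_one_div hα hn hpos hle⟩
end
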